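/- If A is a Kalman residuated lattice (with involution ∼x = x→e), then τ(x) = x∧e is a Nelson conucleus on the involutive residuated lattice A. Conversely, if A is a commutative involutive residuated lattice and τ is a Nelson conucleus on A satisfying τ(x) ≤ e for all x and e ≤ ∼e, then A (with → the common residual) is a Kalman residuated lattice. -/
import Mathlib


/-- A commutative residuated lattice: a lattice with a commutative monoid
operation and a residual `arrow x z` (i.e. `x → z`) satisfying
`x * y ≤ z ↔ y ≤ x → z`. -/
class CommResiduatedLattice (α : Type*) extends Lattice α, CommMonoid α where
  arrow : α → α → α
  arrow_adj : ∀ {x y z : α}, x * y ≤ z ↔ y ≤ arrow x z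

open CommResiduatedLattice

/-- A commutative involutive residuated lattice: additionally an involution
`∼` with `∼∼x = x` and the contraposition law `x → ∼y = y → ∼x`. -/
class InvCommResiduatedLattice (α : Type*) extends CommResiduatedLattice α where
  neg : α → α
  neg_neg : ∀ x : α, neg (neg x) = x
  contra : ∀ x y : α, arrow x (neg y) = arrow y (neg x)

open InvCommResiduatedLattice

/-- A conucleus on a residuated lattice (conditions (C1)-(C5)). -/
def IsConucleus {β : Type*} [Lattice β] [Monoid β] (τ : β → β) : Prop :=
  (∀ x, τ x ≤ x) ∧ (∀ x, τ (τ x) = τ x) ∧ (∀ x y, x ≤ y → τ x ≤ τ y) ∧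
  (∀ x y, τ x * τ y ≤ τ (x * y)) ∧
  (∀ x, τ 1 * τ x = τ x) ∧ (∀ x, τ x * τ 1 = τ x)

/-- A Nelson conucleus: a conucleus additionally satisfying
(T1) `τ(x∨y) = τx ∨ τy`, (T2) `τ(x·y) = τx·τy`, and
(T3) `x·y ≤ τx·y ∨ x·τy`. -/
def IsNelsonConucleus {β : Type*} [Lattice β] [Monoid β] (τ : β → β) : Prop :=
  IsConucleus τ ∧
  (∀ x y, τ (x ⊔ y) = τ x ⊔ τ y) ∧
  (∀ x y, τ (x * y) = τ x * τ y) ∧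
  (∀ x y, x * y ≤ τ x * y ⊔ x * τ y)

/-- A Kalman residuated lattice: a commutative residuated lattice satisfying
(K1)-(K5). -/
def IsKalman (α : Type*) [CommResiduatedLattice α] : Prop :=
  (∀ x : α, arrow (arrow x 1) 1 = x) ∧
  (∀ x y : α, (x * y) ⊓ 1 = (x ⊓ 1) * (y ⊓ 1)) ∧
  (∀ x y : α, arrow (x ⊓ 1) y ⊓ arrow x (y ⊔ 1) = arrow x y) ∧
  (∀ x y : α, 1 ⊓ (x ⊔ y) = ((1 : α) ⊓ x) ⊔ (1 ⊓ y)) ∧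
  (∀ x y : α, x ⊓ (y ⊔ 1) = (x ⊓ y) ⊔ (x ⊓ 1))

section Aux
variable {α : Type*} [CommResiduatedLattice α]

private lemma adj {x y z : α} : x * y ≤ z ↔ y ≤ arrow x z := arrow_adj

private lemma mul_arrow_le (x z : α) : x * arrow x z ≤ z := adj.mpr le_rfl

private lemma rmul_mono {a b c d : α} (h1 : a ≤ b) (h2 : c ≤ d) : a * c ≤ b * d := by
  have hcd : b * c ≤ b * d := adj.mpr (h2.trans (adj.mp (le_refl (b * d))))
  have hab : a * c ≤ b * c := by
    rw [mul_comm a c, mul_comm b c]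
    exact adj.mpr (h1.trans (adj.mp (le_refl (c * b))))
  exact hab.trans hcd

private lemma rarrow_mono {x y z : α} (h : y ≤ z) : arrow x y ≤ arrow x z :=
  adj.mp ((mul_arrow_le x y).trans h)

private lemma rarrow_anti {a b : α} (h : a ≤ b) (z : α) : arrow b z ≤ arrow a z :=
  adj.mp ((rmul_mono h le_rfl).trans (mul_arrow_le b z))

private lemma arrow_one_left (z : α) : arrow 1 z = z := by
  refine le_antisymm ?_ (adj.mp (by rw [one_mul]))
  have := mul_arrow_le (1:α) z
  rwa [one_mul] at this

private lemma rmul_sup (x y z : α) : x * (y ⊔ z) = x * y ⊔ x * z := by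
  refine le_antisymm (adj.mpr (sup_le (adj.mp le_sup_left) (adj.mp le_sup_right))) ?_
  exact sup_le (rmul_mono le_rfl le_sup_left) (rmul_mono le_rfl le_sup_right)

private lemma N_one : arrow (1:α) 1 = 1 := arrow_one_left 1

private lemma N_mul (x y : α) : arrow (x * y) 1 = arrow x (arrow y 1) := by
  have key : ∀ t : α, t ≤ arrow (x*y) 1 ↔ t ≤ arrow x (arrow y 1) := by
    intro t
    rw [← adj, ← adj, ← adj, mul_comm x y, mul_assoc]
  exact le_antisymm ((key _).mp le_rfl) ((key _).mpr le_rfl)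

section Inv
variable (hinv : ∀ x : α, arrow (arrow x 1) 1 = x)
include hinv

private lemma N_le_iff {a b : α} : a ≤ b ↔ arrow b 1 ≤ arrow a 1 := by
  constructor
  · exact fun h => rarrow_anti h 1
  · intro h
    have := rarrow_anti h 1
    rwa [hinv, hinv] at this

private lemma N_inf (x y : α) : arrow (x ⊓ y) 1 = arrow x 1 ⊔ arrow y 1 := by
  apply le_antisymm
  · conv_rhs => rw [← hinv (arrow x 1 ⊔ arrow y 1)]
    refine rarrow_anti (le_inf ?_ ?_) 1
    · have := rarrow_anti (le_sup_left : arrow x 1 ≤ arrow x 1 ⊔ arrow y 1) 1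
      rwa [hinv] at this
    · have := rarrow_anti (le_sup_right : arrow y 1 ≤ arrow x 1 ⊔ arrow y 1) 1
      rwa [hinv] at this
  · exact sup_le (rarrow_anti inf_le_left 1) (rarrow_anti inf_le_right 1)

private lemma N_sup (x y : α) : arrow (x ⊔ y) 1 = arrow x 1 ⊓ arrow y 1 := by
  have h : arrow (arrow x 1 ⊓ arrow y 1) 1 = x ⊔ y := by
    rw [N_inf hinv, hinv, hinv]
  rw [← h, hinv]

private lemma le_iff_mul_N {a b : α} : a ≤ b ↔ a * arrow b 1 ≤ 1 := by
  rw [adj]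
  exact (N_le_iff hinv)

end Inv
end Aux


private lemma T3_of_kalman {α : Type*} [CommResiduatedLattice α]
    (hinv : ∀ x : α, arrow (arrow x 1) 1 = x)
    (hK2 : ∀ x y : α, (x * y) ⊓ 1 = (x ⊓ 1) * (y ⊓ 1))
    (hK3 : ∀ x y : α, arrow (x ⊓ 1) y ⊓ arrow x (y ⊔ 1) = arrow x y)
    (hK5 : ∀ x y : α, x ⊓ (y ⊔ 1) = (x ⊓ y) ⊔ (x ⊓ 1)) :
    ∀ x y : α, x * y ≤ (x ⊓ 1) * y ⊔ x * (y ⊓ 1) := by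
  intro x y
  have h1 : x * y ⊓ 1 ≤ (x ⊓ 1) * y ⊔ x * (y ⊓ 1) := by
    rw [hK2]
    exact (rmul_mono le_rfl inf_le_left).trans le_sup_left
  have h2 : x * y ≤ ((x ⊓ 1) * y ⊔ x * (y ⊓ 1)) ⊔ 1 := by
    apply (N_le_iff hinv).mpr
    have hNz : arrow ((x ⊓ 1) * y ⊔ x * (y ⊓ 1)) 1 = arrow (x * y) 1 := by
      rw [N_sup hinv, N_mul (x ⊓ 1) y, N_mul x (y ⊓ 1), N_inf hinv y 1, N_one,
        hK3 x (arrow y 1), N_mul x y]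
    rw [N_sup hinv, hNz, N_one]
    exact inf_le_left
  calc x * y = (x * y) ⊓ (((x ⊓ 1) * y ⊔ x * (y ⊓ 1)) ⊔ 1) := (inf_eq_left.mpr h2).symm
    _ = ((x * y) ⊓ ((x ⊓ 1) * y ⊔ x * (y ⊓ 1))) ⊔ ((x * y) ⊓ 1) := hK5 _ _
    _ ≤ (x ⊓ 1) * y ⊔ x * (y ⊓ 1) := sup_le inf_le_right h1


/-- if `A` is a Kalman residuated lattice (whose involution is
`∼x = x→e`), then `τ(x) = x∧e` is a Nelson conucleus on `A`; conversely, if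
`A` is a commutative involutive residuated lattice and `τ` is a Nelson
conucleus on `A` with `τ(x) ≤ e` for all `x` and `e ≤ ∼e`, then `A` is a
Kalman residuated lattice. -/
theorem kalman_iff_nelson_conucleus {α : Type*} [InvCommResiduatedLattice α] :
    ((∀ x : α, neg x = arrow x 1) → IsKalman α →
      IsNelsonConucleus (fun x : α => x ⊓ 1)) ∧
    (∀ τ : α → α, IsNelsonConucleus τ → (∀ x : α, τ x ≤ 1) →
      (1 : α) ≤ neg 1 → IsKalman α) := by
  constructor
  · -- Part 1: Kalman implies τ(x) = x ⊓ 1 is a Nelson conucleus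
    intro _ hK
    obtain ⟨hK1, hK2, hK3, hK4, hK5⟩ := hK
    refine ⟨⟨fun x => inf_le_left, fun x => ?_, fun x y h => inf_le_inf_right 1 h,
      fun x y => (hK2 x y).ge, fun x => ?_, fun x => ?_⟩,
      fun x y => ?_, fun x y => hK2 x y, fun x y => T3_of_kalman hK1 hK2 hK3 hK5 x y⟩
    · show (x ⊓ 1) ⊓ 1 = x ⊓ 1
      simp [inf_assoc]
    · show (1 ⊓ 1) * (x ⊓ 1) = x ⊓ 1
      simp
    · show (x ⊓ 1) * (1 ⊓ 1) = x ⊓ 1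
      simp
    · show (x ⊔ y) ⊓ 1 = (x ⊓ 1) ⊔ (y ⊓ 1)
      rw [inf_comm, hK4, inf_comm 1 x, inf_comm 1 y]
  · -- Part 2: a Nelson conucleus below 1 implies Kalman
    intro τ hτ hτ1 h1
    obtain ⟨⟨hC1, hC2, hC3, hC4, hC5, hC6⟩, hT1, hT2, hT3⟩ := hτ
    -- neg 1 = 1
    have hff : neg (1:α) * neg 1 ≤ neg 1 := by
      refine (hT3 (neg 1) (neg 1)).trans (sup_le ?_ ?_)
      · have := rmul_mono (hτ1 (neg (1:α))) (le_refl (neg (1:α)))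
        rwa [one_mul] at this
      · have := rmul_mono (le_refl (neg (1:α))) (hτ1 (neg (1:α)))
        rwa [mul_one] at this
    have harr : arrow (neg (1:α)) (neg 1) = 1 := by
      rw [contra (neg 1) 1, InvCommResiduatedLattice.neg_neg, arrow_one_left]
    have hle : neg (1:α) ≤ 1 := by
      have := adj.mp hff
      rwa [harr] at this
    have hne1 : neg (1:α) = 1 := le_antisymm hle h1
    have hneg : ∀ x : α, neg x = arrow x 1 := by
      intro x
      rw [← hne1, contra x 1, arrow_one_left]
    have hinv : ∀ x : α, arrow (arrow x 1) 1 = x := by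
      intro x
      rw [← hneg x, ← hneg (neg x), InvCommResiduatedLattice.neg_neg]
    -- τ is the meet with 1
    have hτeq : ∀ x : α, τ x = x ⊓ 1 := by
      intro x
      refine le_antisymm (le_inf (hC1 x) (hτ1 x)) ?_
      have key : x ⊓ 1 ≤ τ (x ⊓ 1) := by
        refine (le_iff_mul_N hinv).mpr ?_
        refine (hT3 (x ⊓ 1) (arrow (τ (x ⊓ 1)) 1)).trans (sup_le ?_ ?_)
        · exact mul_arrow_le _ _
        · have := rmul_mono (inf_le_right : x ⊓ 1 ≤ 1) (hτ1 (arrow (τ (x ⊓ 1)) 1))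
          rwa [one_mul] at this
      exact key.trans (hC3 _ _ inf_le_left)
    have hT3' : ∀ a b : α, a * b ≤ (a ⊓ 1) * b ⊔ a * (b ⊓ 1) := by
      intro a b
      have := hT3 a b
      rwa [hτeq, hτeq] at this
    refine ⟨hinv, ?_, ?_, ?_, ?_⟩
    · -- K2
      intro x y
      rw [← hτeq, hT2, hτeq, hτeq]
    · -- K3
      intro x y
      refine le_antisymm ?_ (le_inf (rarrow_anti inf_le_left y) (rarrow_mono le_sup_left))
      refine adj.mp ?_
      refine (le_iff_mul_N hinv).mpr ?_
      have hA : (x * (arrow (x ⊓ 1) y ⊓ arrow x (y ⊔ 1))) * arrow y 1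
          = (arrow (x ⊓ 1) y ⊓ arrow x (y ⊔ 1)) * (x * arrow y 1) := by
        rw [mul_comm x (arrow (x ⊓ 1) y ⊓ arrow x (y ⊔ 1)), mul_assoc]
      rw [hA]
      refine (rmul_mono le_rfl (hT3' x (arrow y 1))).trans ?_
      rw [rmul_sup]
      refine sup_le ?_ ?_
      · have hgy : (arrow (x ⊓ 1) y ⊓ arrow x (y ⊔ 1)) * (x ⊓ 1) ≤ y := by
          rw [mul_comm]
          exact adj.mpr inf_le_left
        have := (le_iff_mul_N hinv).mp hgy
        rwa [mul_assoc] at this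
      · have heq : arrow y 1 ⊓ 1 = arrow (y ⊔ 1) 1 := by rw [N_sup hinv, N_one]
        rw [heq, ← mul_assoc]
        refine (le_iff_mul_N hinv).mp ?_
        rw [mul_comm]
        exact adj.mpr inf_le_right
    · -- K4
      intro x y
      rw [inf_comm, ← hτeq, hT1, hτeq, hτeq, inf_comm 1 x, inf_comm 1 y]
    · -- K5
      intro x y
      refine le_antisymm ?_ (sup_le (le_inf inf_le_left (inf_le_right.trans le_sup_left))
        (le_inf inf_le_left (inf_le_right.trans le_sup_right)))
      refine (le_iff_mul_N hinv).mpr ?_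
      have hNm : arrow ((x ⊓ y) ⊔ (x ⊓ 1)) 1
          = (arrow x 1 ⊔ arrow y 1) ⊓ (arrow x 1 ⊔ 1) := by
        rw [N_sup hinv, N_inf hinv, N_inf hinv, N_one]
      rw [hNm]
      have hc1 : (x ⊓ (y ⊔ 1)) ⊓ 1 = x ⊓ 1 :=
        le_antisymm (le_inf (inf_le_left.trans inf_le_left) inf_le_right)
          (le_inf (le_inf inf_le_left (inf_le_right.trans le_sup_right)) inf_le_right)
      have hd1 : ((arrow x 1 ⊔ arrow y 1) ⊓ (arrow x 1 ⊔ 1)) ⊓ 1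
          = (arrow x 1 ⊓ 1) ⊔ (arrow y 1 ⊓ 1) := by
        have e1 : ((arrow x 1 ⊔ arrow y 1) ⊓ (arrow x 1 ⊔ 1)) ⊓ 1
            = (arrow x 1 ⊔ arrow y 1) ⊓ 1 :=
          le_antisymm (le_inf (inf_le_left.trans inf_le_left) inf_le_right)
            (le_inf (le_inf inf_le_left (inf_le_right.trans le_sup_right)) inf_le_right)
        rw [e1, ← hτeq, hT1, hτeq, hτeq]
      refine (hT3' (x ⊓ (y ⊔ 1)) ((arrow x 1 ⊔ arrow y 1) ⊓ (arrow x 1 ⊔ 1))).trans ?_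
      rw [hc1, hd1, rmul_sup]
      refine sup_le ?_ (sup_le ?_ ?_)
      · have hdle : (arrow x 1 ⊔ arrow y 1) ⊓ (arrow x 1 ⊔ 1) ≤ arrow (x ⊓ 1) 1 := by
          rw [N_inf hinv, N_one]
          exact inf_le_right
        exact (rmul_mono le_rfl hdle).trans (mul_arrow_le _ _)
      · have heq : arrow x 1 ⊓ 1 = arrow (x ⊔ 1) 1 := by rw [N_sup hinv, N_one]
        rw [heq]
        exact (le_iff_mul_N hinv).mp (inf_le_left.trans le_sup_left)
      · have heq : arrow y 1 ⊓ 1 = arrow (y ⊔ 1) 1 := by rw [N_sup hinv, N_one]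
        rw [heq]
        exact (le_iff_mul_N hinv).mp inf_le_right
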